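/- arXiv:2009.00200 — 4 statements merged into one kernel-verified Lean document; each statement's English description precedes it below -/
import Mathlib

section
/- Let L be a lattice, X, Y ∈ L, and a a join-irreducible element admissible with respect to Y such that a ≰ X. Then there exists a join-irreducible element b ≤ a that is admissible with respect to X. -/
/-- If a join-irreducible `a` is admissible w.r.t. `Y` and `a ≰ X`, then there is a
join-irreducible `b ≤ a` admissible w.r.t. `X`. -/
theorem exists_sub_admissible {α : Type*} [Lattice α] [Fintype α] [BoundedOrder α]
    (X Y a : α) (ha : SupIrred a) (hadm : Y ⊓ a ⋖ a) (hX : ¬ a ≤ X) :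
    ∃ b : α, SupIrred b ∧ b ≤ a ∧ X ⊓ b ⋖ b := by
  -- take a minimal element `b` with `b ≤ a` and `¬ b ≤ X`
  obtain ⟨b, ⟨hba, hbX⟩, hmin⟩ :=
    (wellFounded_lt (α := α)).has_min {b : α | b ≤ a ∧ ¬ b ≤ X} ⟨a, le_rfl, hX⟩
  -- every element strictly below `b` is ≤ X
  have key : ∀ c : α, c < b → c ≤ X := by
    intro c hc
    by_contra hcX
    exact hmin c ⟨hc.le.trans hba, hcX⟩ hc
  refine ⟨b, ⟨?_, ?_⟩, hba, ?_⟩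
  · -- ¬ IsMin b
    intro hb
    exact hbX ((hb bot_le).trans bot_le)
  · intro c d hcd
    by_contra h
    push_neg at h
    have hc : c < b := lt_of_le_of_ne (hcd ▸ le_sup_left) h.1
    have hd : d < b := lt_of_le_of_ne (hcd ▸ le_sup_right) h.2
    exact hbX (hcd ▸ sup_le (key c hc) (key d hd))
  · constructor
    · exact lt_of_le_of_ne inf_le_right fun h => hbX (h ▸ inf_le_left)
    · intro c hc hcb
      have := key c hcb
      exact absurd (le_inf this hcb.le) (not_le_of_gt hc)
end

section
/- (Height axiom ⇔ Independence axiom) Let L be a finite lattice and I ⊆ L a nonempty order ideal. Then the following are equivalent: (a) for every X ∈ L, all maximal elements of I^X = {I' ∈ I : I' ≤ X} have the same height; (b) for all I₁, I₂ ∈ I with |I₁| < |I₂| there exists J ∈ I with I₁ < J ≤ I₁ ∨ I₂. -/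
/-- The height of an element: length of a maximal chain from the bottom. -/
noncomputable def ht {α : Type*} [Preorder α] (x : α) : ℕ := (Order.height x).toNat

lemma height_ne_top' {α : Type*} [Preorder α] [Fintype α] (x : α) :
    Order.height x ≠ ⊤ := by
  intro h
  obtain ⟨p, -, hp⟩ := Order.height_eq_top_iff.mp h (Fintype.card α)
  have := p.length_lt_card
  omega

lemma ht_mono {α : Type*} [Preorder α] [Fintype α] {a b : α} (h : a ≤ b) :
    ht a ≤ ht b :=
  ENat.toNat_le_toNat (Order.height_mono h) (height_ne_top' b)

/-- Height axiom ⇔ independence (augmentation) axiom for a nonempty ideal of a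
finite lattice. -/
theorem height_axiom_iff_independence_axiom {α : Type*} [Lattice α] [Fintype α]
    [BoundedOrder α] (𝓘 : Set α) (hne : 𝓘.Nonempty) (hideal : IsLowerSet 𝓘) :
    (∀ X I₁ I₂ : α, Maximal (fun J => J ∈ 𝓘 ∧ J ≤ X) I₁ →
        Maximal (fun J => J ∈ 𝓘 ∧ J ≤ X) I₂ → ht I₁ = ht I₂) ↔
    (∀ I₁ I₂, I₁ ∈ 𝓘 → I₂ ∈ 𝓘 → ht I₁ < ht I₂ →
        ∃ J ∈ 𝓘, I₁ < J ∧ J ≤ I₁ ⊔ I₂) := by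
  constructor
  · intro ha I₁ I₂ h₁ h₂ hlt
    set X := I₁ ⊔ I₂ with hX
    obtain ⟨M₁, hM₁le, hM₁⟩ := Finite.exists_le_maximal
      (p := fun J => J ∈ 𝓘 ∧ J ≤ X) ⟨h₁, le_sup_left⟩
    obtain ⟨M₂, hM₂le, hM₂⟩ := Finite.exists_le_maximal
      (p := fun J => J ∈ 𝓘 ∧ J ≤ X) ⟨h₂, le_sup_right⟩
    have heq : ht M₁ = ht M₂ := ha X M₁ M₂ hM₁ hM₂
    have h2 : ht I₂ ≤ ht M₂ := ht_mono hM₂le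
    have hne' : I₁ ≠ M₁ := by
      rintro rfl
      omega
    exact ⟨M₁, hM₁.prop.1, lt_of_le_of_ne hM₁le hne', hM₁.prop.2⟩
  · intro hb X I₁ I₂ h₁ h₂
    by_contra hne'
    wlog hlt : ht I₁ < ht I₂ generalizing I₁ I₂
    · exact this I₂ I₁ h₂ h₁ (Ne.symm hne') (by omega)
    obtain ⟨J, hJ, hIJ, hJle⟩ := hb I₁ I₂ h₁.prop.1 h₂.prop.1 hlt
    exact absurd (h₁.le_of_ge ⟨hJ, hJle.trans (sup_le h₁.prop.2 h₂.prop.2)⟩ hIJ.le)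
      (not_le_of_gt hIJ)
end

section
/- (Local augmentation suffices on modular lattices) Let L be a finite modular lattice and I ⊆ L a nonempty order ideal. Then I satisfies the augmentation property (for all I₁, I₂ ∈ I with |I₁| < |I₂| there exists J ∈ I with I₁ < J ≤ I₁ ∨ I₂) if and only if it satisfies the local augmentation property: for all I₁, I₂ ∈ I with |I₁| + 1 = |I₂| and I₂ ⋖ I₁ ∨ I₂, there exists J ∈ I with I₁ < J ≤ I₁ ∨ I₂. -/
/-!
In a finite modular lattice covers raise the height by exactly one, and heights are additive:
`ht (a ⊔ b) + ht (a ⊓ b) = ht a + ht b`.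

Local augmentation implies augmentation. If `I₁` is at most one step above `I₁ ⊓ I₂`, pick `x`
between `I₁ ⊓ I₂` and `I₂` of height `ht I₁ + 1`: either `I₁ < x`, or additivity forces
`x ⋖ I₁ ⊔ x` and local augmentation applies to `(I₁, x)`. In general, induct on `I₁ ⊔ I₂`: if
`I₁ ≰ I₂`, replace `I₁` by a lower cover `I₁'` lying above `I₁ ⊓ I₂`. Then `I₁' ⊔ I₂ ⋖ I₁ ⊔ I₂`,
so at most two augmentations of `I₁'` towards `I₂` give `K ∈ 𝓘` with `I₁' ≤ K ≤ I₁' ⊔ I₂` and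
`ht I₁ < ht K`; now `I₁` is one step above `I₁ ⊓ K`, and the first case applies to `(I₁, K)`.
-/

section Height

variable {α : Type*} [Preorder α] [Finite α]

theorem height_lt_top_of_finite (x : α) : Order.height x < ⊤ := by
  have := Fintype.ofFinite α
  exact (Order.height_le fun p _ ↦ mod_cast p.length_lt_card.le).trans_lt
    (ENat.natCast_lt_top (Fintype.card α))

theorem coe_ht (x : α) : (ht x : ℕ∞) = Order.height x :=
  ENat.natCast_toNat (height_lt_top_of_finite x).ne

theorem ht_strictMono : StrictMono (ht : α → ℕ) := fun x y h ↦ by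
  have := Order.height_strictMono h (height_lt_top_of_finite x)
  rwa [← coe_ht, ← coe_ht, Nat.cast_lt] at this

theorem ht_mono_s6 : Monotone (ht : α → ℕ) := fun x y h ↦ by
  have := Order.height_mono h
  rwa [← coe_ht, ← coe_ht, Nat.cast_le] at this

theorem covBy_of_lt_of_ht_eq {x y : α} (h : x < y) (hxy : ht y = ht x + 1) : x ⋖ y :=
  ⟨h, fun _ hxz hzy ↦ by have := ht_strictMono hxz; have := ht_strictMono hzy; omega⟩

theorem exists_lt_ht_eq {x : α} {n : ℕ} (h : n < ht x) : ∃ y < x, ht y = n := by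
  obtain ⟨y, hyx, hy⟩ := (Order.coe_lt_height_iff (height_lt_top_of_finite x)).mp
    (by rwa [← coe_ht, Nat.cast_lt])
  exact ⟨y, hyx, by rwa [← coe_ht, Nat.cast_inj] at hy⟩

end Height

section Modular

variable {α : Type*} [Lattice α]

theorem sup_eq_of_covBy_of_covBy {x y z : α} (hx : x ⋖ y) (hz : z ⋖ y) (hxz : x ≠ z) :
    x ⊔ z = y :=
  (hx.eq_or_eq le_sup_left (sup_le hx.le hz.le)).resolve_left fun h ↦
    hxz ((hz.eq_or_eq (h ▸ le_sup_right) hx.le).resolve_right hx.ne)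

variable [IsModularLattice α]

theorem sup_covBy_sup_of_covBy {a a' : α} (b : α) (h : a' ⋖ a) (hinf : a ⊓ b ≤ a') :
    a' ⊔ b ⋖ a ⊔ b := by
  have hmeet : a ⊓ (a' ⊔ b) = a' := by
    rw [inf_comm, sup_inf_assoc_of_le b h.le, inf_comm b a, sup_eq_left.mpr hinf]
  have hjoin : a ⊔ (a' ⊔ b) = a ⊔ b := by
    rw [← sup_assoc, sup_eq_left.mpr h.le]
  rw [← hjoin]
  exact covBy_sup_of_inf_covBy_left (by rwa [hmeet])

variable [Finite α]

theorem CovBy.ht_eq_add_one {x y : α} (h : x ⋖ y) : ht y = ht x + 1 := by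
  induction y using WellFoundedLT.induction generalizing x with
  | ind y ih =>
  have hxy := ht_strictMono h.lt
  obtain ⟨z, hzy, hzht⟩ := exists_lt_ht_eq (x := y) (n := ht y - 1) (by omega)
  obtain rfl | hxz := eq_or_ne x z
  · omega
  have hzy : z ⋖ y := covBy_of_lt_of_ht_eq hzy (by omega)
  -- by modularity the meet of two distinct lower covers of `y` is a lower cover of both
  have hsup := sup_eq_of_covBy_of_covBy h hzy hxz
  have hx : x ⊓ z ⋖ x := inf_covBy_of_covBy_sup_right (hsup ▸ hzy)
  have hz : x ⊓ z ⋖ z := inf_covBy_of_covBy_sup_left (hsup ▸ h)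
  have := ih z hzy.lt hz
  have := ht_strictMono hx.lt
  omega

theorem exists_ht_eq_of_le {a b : α} (hab : a ≤ b) {n : ℕ} (ha : ht a ≤ n) (hb : n ≤ ht b) :
    ∃ x, a ≤ x ∧ x ≤ b ∧ ht x = n := by
  induction b using WellFoundedLT.induction with
  | ind b ih =>
  obtain hn | hn := hb.eq_or_lt
  · exact ⟨b, hab, le_rfl, hn.symm⟩
  have hab : a < b := hab.lt_of_ne (by rintro rfl; omega)
  obtain ⟨c, hac, hcb⟩ := exists_le_covBy_of_lt hab
  have := hcb.ht_eq_add_one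
  obtain ⟨x, hax, hxc, hx⟩ := ih c hcb.lt hac (by omega)
  exact ⟨x, hax, hxc.trans hcb.le, hx⟩

theorem ht_sup_add_ht_inf (a b : α) : ht (a ⊔ b) + ht (a ⊓ b) = ht a + ht b := by
  induction a using WellFoundedLT.induction with
  | ind a ih =>
  by_cases hab : a ≤ b
  · rw [sup_eq_right.mpr hab, inf_eq_left.mpr hab, add_comm]
  obtain ⟨a', hinf, ha'a⟩ := exists_le_covBy_of_lt (inf_lt_left.mpr hab)
  have hmeet : a' ⊓ b = a ⊓ b :=
    le_antisymm (inf_le_inf_right b ha'a.le) (le_inf hinf inf_le_right)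
  have hsum := ih a' ha'a.lt
  rw [hmeet] at hsum
  have := ha'a.ht_eq_add_one
  have := (sup_covBy_sup_of_covBy b ha'a hinf).ht_eq_add_one
  omega

end Modular

section Augmentation

variable {α : Type*} [Lattice α]

def Augmentable (𝓘 : Set α) (I₁ I₂ : α) : Prop :=
  ∃ J ∈ 𝓘, I₁ < J ∧ J ≤ I₁ ⊔ I₂

theorem Augmentable.mono_right {𝓘 : Set α} {I₁ I₂ K : α} (h : Augmentable 𝓘 I₁ K)
    (hK : K ≤ I₁ ⊔ I₂) : Augmentable 𝓘 I₁ I₂ :=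
  let ⟨J, hJ, hI₁J, hJK⟩ := h
  ⟨J, hJ, hI₁J, hJK.trans (sup_le le_sup_left hK)⟩

def HasLocalAugmentation (𝓘 : Set α) : Prop :=
  ∀ I₁ I₂, I₁ ∈ 𝓘 → I₂ ∈ 𝓘 → ht I₁ + 1 = ht I₂ → I₂ ⋖ I₁ ⊔ I₂ → Augmentable 𝓘 I₁ I₂

variable [IsModularLattice α] [Finite α] {𝓘 : Set α}

namespace HasLocalAugmentation

theorem augmentable_of_ht_le_ht_inf_add_one (hloc : HasLocalAugmentation 𝓘)
    (hideal : IsLowerSet 𝓘) {I₁ I₂ : α} (h₁ : I₁ ∈ 𝓘) (h₂ : I₂ ∈ 𝓘) (hlt : ht I₁ < ht I₂)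
    (hinf : ht I₁ ≤ ht (I₁ ⊓ I₂) + 1) : Augmentable 𝓘 I₁ I₂ := by
  have := ht_mono_s6 (inf_le_left : I₁ ⊓ I₂ ≤ I₁)
  obtain ⟨x, hx₁, hx₂, hx⟩ := exists_ht_eq_of_le (inf_le_right : I₁ ⊓ I₂ ≤ I₂)
    (n := ht I₁ + 1) (by omega) hlt
  have hxI : x ∈ 𝓘 := hideal hx₂ h₂
  by_cases hI₁x : I₁ ≤ x
  · exact ⟨x, hxI, hI₁x.lt_of_ne (by rintro rfl; omega), hx₂.trans le_sup_right⟩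
  have := ht_strictMono (inf_lt_left.mpr hI₁x)
  have := ht_mono_s6 (le_inf inf_le_left hx₁ : I₁ ⊓ I₂ ≤ I₁ ⊓ x)
  have := ht_sup_add_ht_inf I₁ x
  have hcov : x ⋖ I₁ ⊔ x := covBy_of_lt_of_ht_eq (right_lt_sup.mpr hI₁x) (by omega)
  exact (hloc I₁ x h₁ hxI (by omega) hcov).mono_right (hx₂.trans le_sup_right)

theorem augmentable (hloc : HasLocalAugmentation 𝓘) (hideal : IsLowerSet 𝓘) {I₁ I₂ : α}
    (h₁ : I₁ ∈ 𝓘) (h₂ : I₂ ∈ 𝓘) (hlt : ht I₁ < ht I₂) : Augmentable 𝓘 I₁ I₂ := by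
  induction hm : I₁ ⊔ I₂ using WellFoundedLT.induction generalizing I₁ I₂ with
  | ind m ih =>
  by_cases hle : I₁ ≤ I₂
  · exact ⟨I₂, h₂, hle.lt_of_ne (by rintro rfl; omega), le_sup_right⟩
  obtain ⟨I₁', hinf, hI₁'⟩ := exists_le_covBy_of_lt (inf_lt_left.mpr hle)
  have hI₁'mem : I₁' ∈ 𝓘 := hideal hI₁'.le h₁
  have := hI₁'.ht_eq_add_one
  have hjoin : I₁' ⊔ I₂ < m := hm ▸ (sup_covBy_sup_of_covBy I₂ hI₁' hinf).lt
  obtain ⟨K, hK, hI₁'K, hKle, hKht⟩ : ∃ K ∈ 𝓘, I₁' ≤ K ∧ K ≤ I₁' ⊔ I₂ ∧ ht I₁ < ht K := by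
    obtain ⟨J, hJ, hI₁'J, hJle⟩ := ih _ hjoin hI₁'mem h₂ (by omega) rfl
    have := ht_strictMono hI₁'J
    by_cases hJht : ht I₁ < ht J
    · exact ⟨J, hJ, hI₁'J.le, hJle, hJht⟩
    have hJjoin : J ⊔ I₂ ≤ I₁' ⊔ I₂ := sup_le hJle le_sup_right
    obtain ⟨J', hJ', hJJ', hJ'le⟩ := ih _ (hJjoin.trans_lt hjoin) hJ h₂ (by omega) rfl
    have := ht_strictMono hJJ'
    exact ⟨J', hJ', (hI₁'J.trans hJJ').le, hJ'le.trans hJjoin, by omega⟩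
  have := ht_mono_s6 (le_inf hI₁'.le hI₁'K)
  exact (hloc.augmentable_of_ht_le_ht_inf_add_one hideal h₁ hK hKht (by omega)).mono_right
    (hKle.trans (sup_le_sup_right hI₁'.le I₂))

end HasLocalAugmentation

end Augmentation

theorem augmentation_iff_local_augmentation_general {α : Type*} [Lattice α] [Fintype α]
    [IsModularLattice α]
    (𝓘 : Set α) (hideal : IsLowerSet 𝓘) :
    (∀ I₁ I₂, I₁ ∈ 𝓘 → I₂ ∈ 𝓘 → ht I₁ < ht I₂ →
        ∃ J ∈ 𝓘, I₁ < J ∧ J ≤ I₁ ⊔ I₂) ↔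
    (∀ I₁ I₂, I₁ ∈ 𝓘 → I₂ ∈ 𝓘 → ht I₁ + 1 = ht I₂ → I₂ ⋖ I₁ ⊔ I₂ →
        ∃ J ∈ 𝓘, I₁ < J ∧ J ≤ I₁ ⊔ I₂) :=
  ⟨fun haug I₁ I₂ h₁ h₂ hht _ ↦ haug I₁ I₂ h₁ h₂ (by omega),
    fun hloc _ _ h₁ h₂ hlt ↦ HasLocalAugmentation.augmentable hloc hideal h₁ h₂ hlt⟩

/-- On a finite modular lattice, the augmentation property is equivalent to its
local version. -/
theorem augmentation_iff_local_augmentation {α : Type*} [Lattice α] [Fintype α]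
    [BoundedOrder α] [IsModularLattice α]
    (𝓘 : Set α) (hne : 𝓘.Nonempty) (hideal : IsLowerSet 𝓘) :
    (∀ I₁ I₂, I₁ ∈ 𝓘 → I₂ ∈ 𝓘 → ht I₁ < ht I₂ →
        ∃ J ∈ 𝓘, I₁ < J ∧ J ≤ I₁ ⊔ I₂) ↔
    (∀ I₁ I₂, I₁ ∈ 𝓘 → I₂ ∈ 𝓘 → ht I₁ + 1 = ht I₂ → I₂ ⋖ I₁ ⊔ I₂ →
        ∃ J ∈ 𝓘, I₁ < J ∧ J ≤ I₁ ⊔ I₂) :=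
  augmentation_iff_local_augmentation_general 𝓘 hideal
end

section
/- (Ladder lemma) Let L be a finite lower locally modular lattice, let X₀ ⋖ X₁ ⋖ ⋯ ⋖ X_m be a saturated chain, and let Z ⋖ X_m. Then there exists an index l such that X_i ∧ Z ⋖ X_i for all i = l, l+1, ..., m, and X_{l-1} = X_l ∧ Z (interpreting the condition vacuously below l). -/
/-- If `A` and `B` are distinct elements both covered by `W` in a lattice whose
interval `[W⁻, W]` is modular, then `A ⊓ B ⋖ A`. -/
lemma ladder_aux {α : Type*} [Lattice α] (minus : α → α)
    (hminus : ∀ W : α, IsGLB {Y : α | Y ⋖ W} (minus W))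
    (hLLM : ∀ W A B C : α,
      minus W ≤ A → A ≤ W → minus W ≤ B → B ≤ W → minus W ≤ C → C ≤ W →
      A ≤ C → A ⊔ (B ⊓ C) = (A ⊔ B) ⊓ C)
    (W A B : α) (hA : A ⋖ W) (hB : B ⋖ W) (hne : A ≠ B) :
    A ⊓ B ⋖ A := by
  have hmA : minus W ≤ A := (hminus W).1 hA
  have hmB : minus W ≤ B := (hminus W).1 hB
  have hAB_lt : A ⊓ B < A := by
    rcases lt_or_eq_of_le (inf_le_left : A ⊓ B ≤ A) with h | h
    · exact h
    · exfalso
      have hAleB : A ≤ B := by rw [← h]; exact inf_le_right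
      rcases lt_or_eq_of_le hAleB with h' | h'
      · exact hA.2 h' hB.lt
      · exact hne h'
  refine ⟨hAB_lt, ?_⟩
  intro c hc1 hc2
  have hcA : c ≤ A := hc2.le
  have hcB : ¬ c ≤ B := fun hh => absurd (le_inf hcA hh) (not_le_of_gt hc1)
  have hBsup : B < c ⊔ B :=
    lt_of_le_of_ne le_sup_right (fun hh => hcB (hh ▸ le_sup_left))
  have hsupW : c ⊔ B = W := by
    have hle : c ⊔ B ≤ W := sup_le (hcA.trans hA.le) hB.le
    rcases lt_or_eq_of_le hle with h' | h'
    · exact absurd h' (hB.2 hBsup)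
    · exact h'
  have hmc : minus W ≤ c := le_trans (le_inf hmA hmB) hc1.le
  have hmod := hLLM W c B A hmc (hcA.trans hA.le) hmB hB.le hmA hA.le hcA
  rw [hsupW, inf_eq_right.mpr hA.le] at hmod
  have hBAc : B ⊓ A ≤ c := le_trans (le_of_eq (inf_comm B A)) hc1.le
  rw [sup_eq_left.mpr hBAc] at hmod
  exact absurd hmod (ne_of_lt hc2)

/-- Ladder lemma on a finite lower locally modular lattice: given a saturated chain
`X 0 ⋖ X 1 ⋖ ⋯ ⋖ X m` and `Z ⋖ X m`, there is an index `l ≤ m` such that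
`X i ⊓ Z ⋖ X i` for all `l ≤ i ≤ m`, and `X (l-1) = X l ⊓ Z` whenever `l ≥ 1`.
Here `minus W` denotes `W⁻ = ⋀ {Y | Y ⋖ W}`, and lower local modularity says that
each interval `[W⁻, W]` is modular. -/
theorem ladder_lemma {α : Type*} [Lattice α] [Fintype α] [BoundedOrder α]
    (minus : α → α)
    (hminus : ∀ W : α, IsGLB {Y : α | Y ⋖ W} (minus W))
    (hLLM : ∀ W A B C : α,
      minus W ≤ A → A ≤ W → minus W ≤ B → B ≤ W → minus W ≤ C → C ≤ W →
      A ≤ C → A ⊔ (B ⊓ C) = (A ⊔ B) ⊓ C)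
    (m : ℕ) (X : ℕ → α) (hchain : ∀ i < m, X i ⋖ X (i + 1))
    (Z : α) (hZ : Z ⋖ X m) :
    ∃ l ≤ m, (∀ i, l ≤ i → i ≤ m → X i ⊓ Z ⋖ X i) ∧
      (1 ≤ l → X (l - 1) = X l ⊓ Z) := by
  suffices h : ∀ k, k ≤ m →
      ((∃ l ≤ m, (∀ i, l ≤ i → i ≤ m → X i ⊓ Z ⋖ X i) ∧
        (1 ≤ l → X (l - 1) = X l ⊓ Z)) ∨
       (∀ i, m - k ≤ i → i ≤ m → X i ⊓ Z ⋖ X i)) by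
    rcases h m le_rfl with h | h
    · exact h
    · exact ⟨0, Nat.zero_le m, fun i _ hi => h i (by omega) hi, by omega⟩
  intro k
  induction k with
  | zero =>
    intro _
    right
    intro i h1 h2
    have hi : i = m := by omega
    rw [hi, inf_eq_right.mpr hZ.le]
    exact hZ
  | succ k ih =>
    intro hk
    rcases ih (by omega) with h | h
    · left; exact h
    · set i0 := m - k with hi0
      have hi0m : i0 ≤ m := Nat.sub_le m k
      have hi01 : 1 ≤ i0 := by omega
      have hcov : X i0 ⊓ Z ⋖ X i0 := h i0 le_rfl hi0m
      have hchain' : X (i0 - 1) ⋖ X i0 := by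
        have := hchain (i0 - 1) (by omega)
        rwa [Nat.sub_add_cancel hi01] at this
      by_cases heq : X (i0 - 1) = X i0 ⊓ Z
      · left
        exact ⟨i0, hi0m, fun i h1 h2 => h i h1 h2, fun _ => heq⟩
      · right
        intro i h1 h2
        rcases Nat.lt_or_ge i i0 with hi | hi
        · have hii : i = i0 - 1 := by omega
          subst hii
          have key : X (i0 - 1) ⊓ (X i0 ⊓ Z) ⋖ X (i0 - 1) :=
            ladder_aux minus hminus hLLM (X i0) (X (i0 - 1)) (X i0 ⊓ Z)
              hchain' hcov heq
          have heq2 : X (i0 - 1) ⊓ (X i0 ⊓ Z) = X (i0 - 1) ⊓ Z := by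
            rw [← inf_assoc, inf_eq_left.mpr hchain'.le]
          rwa [heq2] at key
        · exact h i hi h2
end
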